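/- arXiv:0804.3628 — 2 statements merged into one kernel-verified Lean document; each statement's English description precedes it below -/
import Mathlib

section
/- (Linear protocol special case) Suppose the weighted digraph G on n nodes is strongly connected with Laplacian L, and let α > 0. Then for every initial state x(0) ∈ ℝⁿ, the solution of the linear protocol ẋ(t) = −αL x(t) reaches consensus: for every i, lim_{t→∞} x_i(t) = ∑_{j=1}^n ξ_j x_j(0), where ξ is the normalized positive left eigenvector of L for the eigenvalue 0 (ξᵀL = 0, ξ_i > 0, ∑ξ_i = 1). -/
/-!
Write the flow as `x t = exp (t • B) *ᵥ x 0` with `B = -α • L`. The off-diagonal entries of `B`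
are nonnegative and its rows sum to zero, so after shifting `B` by a multiple of the identity one
sees that every `exp (t • B)`, `t ≥ 0`, is row-stochastic, and strong connectivity makes
`exp B` entrywise positive, say `≥ δ`. A row-stochastic matrix with entries `≥ δ` shrinks the
spread `max v - min v` by the factor `1 - 2δ`, so the spread of `x t` decays geometrically.
Meanwhile `ξ ⬝ᵥ x t` is conserved because `ξ ᵥ* L = 0`, and as a convex combination of the
`x t i` it lies within the spread of each of them.
-/

open Matrix Finset Filter Topology NormedSpace

attribute [local instance] Matrix.linftyOpNormedAddCommGroup Matrix.linftyOpNormedSpace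
  Matrix.linftyOpNormedRing Matrix.linftyOpNormedAlgebra

def laplacian {ι R : Type*} [Fintype ι] [DecidableEq ι] [Ring R]
    (A : Matrix ι ι R) : Matrix ι ι R :=
  of fun i j => if i = j then ∑ k ∈ univ.erase i, A i k else -A i j

lemma laplacian_mulVec_one {ι R : Type*} [Fintype ι] [DecidableEq ι] [Ring R]
    (A : Matrix ι ι R) : laplacian A *ᵥ 1 = 0 := by
  ext i
  simp only [laplacian, mulVec, dotProduct, of_apply, Pi.one_apply, mul_one, Pi.zero_apply]
  rw [← add_sum_erase _ _ (mem_univ i), if_pos rfl,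
    sum_congr rfl fun j hj => if_neg (ne_of_mem_erase hj).symm, sum_neg_distrib, add_neg_cancel]

section Spread

variable {ι : Type*} [Fintype ι]

noncomputable def spread (v : ι → ℝ) : ℝ := (⨆ i, v i) - ⨅ i, v i

lemma dotProduct_le_sub_mul {w v : ι → ℝ} {M : ℝ} (hw : ∀ k, 0 ≤ w k) (hw₁ : ∑ k, w k = 1)
    (hv : ∀ k, v k ≤ M) (j : ι) : w ⬝ᵥ v ≤ M - w j * (M - v j) := by
  have hsum : w ⬝ᵥ v = M - ∑ k, w k * (M - v k) := by
    simp only [dotProduct, mul_sub, sum_sub_distrib, ← sum_mul, hw₁, one_mul, sub_sub_cancel]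
  rw [hsum]
  exact sub_le_sub_left (single_le_sum (f := fun k => w k * (M - v k))
    (fun k _ => mul_nonneg (hw k) (sub_nonneg.2 (hv k))) (mem_univ j)) M

lemma add_mul_le_dotProduct {w v : ι → ℝ} {m : ℝ} (hw : ∀ k, 0 ≤ w k) (hw₁ : ∑ k, w k = 1)
    (hv : ∀ k, m ≤ v k) (j : ι) : m + w j * (v j - m) ≤ w ⬝ᵥ v := by
  have h := dotProduct_le_sub_mul hw hw₁ (v := -v) (M := -m) (fun k => neg_le_neg (hv k)) j
  simp only [dotProduct_neg, Pi.neg_apply] at h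
  linarith

lemma le_ciSup_of_finite (v : ι → ℝ) (i : ι) : v i ≤ ⨆ i, v i :=
  le_ciSup (Finite.bddAbove_range v) i

lemma ciInf_le_of_finite (v : ι → ℝ) (i : ι) : ⨅ i, v i ≤ v i :=
  ciInf_le (Finite.bddBelow_range v) i

lemma abs_sub_dotProduct_le_spread {w : ι → ℝ} (hw : ∀ k, 0 ≤ w k) (hw₁ : ∑ k, w k = 1)
    (v : ι → ℝ) (i : ι) : |v i - w ⬝ᵥ v| ≤ spread v := by
  have hle := dotProduct_le_sub_mul hw hw₁ (le_ciSup_of_finite v) i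
  have hge := add_mul_le_dotProduct hw hw₁ (ciInf_le_of_finite v) i
  have hsup := mul_nonneg (hw i) (sub_nonneg.2 (le_ciSup_of_finite v i))
  have hinf := mul_nonneg (hw i) (sub_nonneg.2 (ciInf_le_of_finite v i))
  rw [abs_le, spread]
  constructor <;> linarith [le_ciSup_of_finite v i, ciInf_le_of_finite v i]

variable [Nonempty ι]

lemma spread_nonneg (v : ι → ℝ) : 0 ≤ spread v :=
  sub_nonneg.2 (ciInf_le_ciSup (Finite.bddBelow_range v) (Finite.bddAbove_range v))

variable [DecidableEq ι]

/-- Every row of `P` puts weight at least `δ` on both the maximum and the minimum of `v`. -/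
lemma spread_mulVec_le {P : Matrix ι ι ℝ} (hP : P ∈ rowStochastic ℝ ι) {δ : ℝ}
    (hδ : ∀ i j, δ ≤ P i j) (v : ι → ℝ) : spread (P *ᵥ v) ≤ (1 - 2 * δ) * spread v := by
  obtain ⟨j₁, hj₁⟩ := exists_eq_ciSup_of_finite (f := v)
  obtain ⟨j₀, hj₀⟩ := exists_eq_ciInf_of_finite (f := v)
  have hgap (i j : ι) : δ * spread v ≤ P i j * spread v :=
    mul_le_mul_of_nonneg_right (hδ i j) (spread_nonneg v)
  unfold spread at hgap ⊢
  have hupper (i : ι) : (P *ᵥ v) i ≤ (⨆ i, v i) - δ * ((⨆ i, v i) - ⨅ i, v i) := by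
    have := dotProduct_le_sub_mul (hP.1 i) (sum_row_of_mem_rowStochastic hP i)
      (le_ciSup_of_finite v) j₀
    rw [hj₀] at this
    exact this.trans (by linarith [hgap i j₀])
  have hlower (i : ι) : (⨅ i, v i) + δ * ((⨆ i, v i) - ⨅ i, v i) ≤ (P *ᵥ v) i := by
    have := add_mul_le_dotProduct (hP.1 i) (sum_row_of_mem_rowStochastic hP i)
      (ciInf_le_of_finite v) j₁
    rw [hj₁] at this
    exact (by linarith [hgap i j₁] : _ ≤ _).trans this
  linarith [ciSup_le hupper, le_ciInf hlower]

lemma spread_mulVec_le_spread {P : Matrix ι ι ℝ} (hP : P ∈ rowStochastic ℝ ι) (v : ι → ℝ) :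
    spread (P *ᵥ v) ≤ spread v := by
  simpa using spread_mulVec_le hP (fun i j => hP.1 i j) v

lemma spread_pow_mulVec_le {P : Matrix ι ι ℝ} (hP : P ∈ rowStochastic ℝ ι) {δ : ℝ}
    (hδ : ∀ i j, δ ≤ P i j) (hδ₂ : 2 * δ ≤ 1) (v : ι → ℝ) (k : ℕ) :
    spread (P ^ k *ᵥ v) ≤ (1 - 2 * δ) ^ k * spread v := by
  induction k with
  | zero => simp
  | succ k ih =>
    rw [pow_succ', ← mulVec_mulVec, pow_succ', mul_assoc]
    exact (spread_mulVec_le hP hδ _).trans (mul_le_mul_of_nonneg_left ih (by linarith))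

end Spread

namespace Matrix

variable {ι : Type*} [Fintype ι] [DecidableEq ι]

lemma hasSum_exp_apply (M : Matrix ι ι ℝ) (i j : ι) :
    HasSum (fun k : ℕ => (k.factorial : ℝ)⁻¹ * (M ^ k) i j) (exp M i j) :=
  Pi.hasSum.1 (Pi.hasSum.1 (exp_series_hasSum_exp' (𝕂 := ℝ) M) i) j

lemma exp_apply_nonneg_of_nonneg {N : Matrix ι ι ℝ} (hN : ∀ i j, 0 ≤ N i j) (i j : ι) :
    0 ≤ exp N i j :=
  (hasSum_exp_apply N i j).nonneg fun k => by have := pow_apply_nonneg hN k i j; positivity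

lemma exp_apply_pos_of_pow_apply_pos {N : Matrix ι ι ℝ} (hN : ∀ i j, 0 ≤ N i j) {i j : ι} {k : ℕ}
    (hk : 0 < (N ^ k) i j) : 0 < exp N i j :=
  (by positivity : 0 < (k.factorial : ℝ)⁻¹ * (N ^ k) i j).trans_le <|
    le_hasSum (hasSum_exp_apply N i j) k fun m _ => by
      have := pow_apply_nonneg hN m i j; positivity

lemma exists_pow_apply_pos_of_transGen {N : Matrix ι ι ℝ} (hN : ∀ i j, 0 ≤ N i j) {i j : ι}
    (h : Relation.TransGen (fun u v => 0 < N u v) i j) : ∃ k, 0 < (N ^ k) i j := by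
  induction h with
  | single hij => exact ⟨1, by simpa using hij⟩
  | @tail b c _ hbc ih =>
    obtain ⟨k, hk⟩ := ih
    refine ⟨k + 1, ?_⟩
    rw [pow_succ, mul_apply]
    exact sum_pos' (fun l _ => mul_nonneg (pow_apply_nonneg hN k i l) (hN l c))
      ⟨b, mem_univ b, mul_pos hk hbc⟩

lemma exp_eq_smul_exp_add_smul_one (B : Matrix ι ι ℝ) (c : ℝ) :
    exp B = Real.exp (-c) • exp (B + c • 1) := by
  have hscalar : exp ((-c) • (1 : Matrix ι ι ℝ)) = Real.exp (-c) • 1 := by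
    rw [← Algebra.algebraMap_eq_smul_one, ← Algebra.algebraMap_eq_smul_one, Real.exp_eq_exp_ℝ,
      algebraMap_exp_comm]
    rfl
  conv_lhs => rw [show B = (B + c • 1) + (-c) • 1 by simp]
  rw [exp_add_of_commute _ _ ((Commute.one_right _).smul_right _), hscalar, mul_smul_comm,
    mul_one]

lemma exists_nonneg_le_add_smul_one {B : Matrix ι ι ℝ} (hB : ∀ i j, i ≠ j → 0 ≤ B i j) :
    ∃ c : ℝ, ∀ i j, 0 ≤ (B + c • 1) i j ∧ B i j ≤ (B + c • 1) i j := by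
  refine ⟨∑ k, |B k k|, fun i j => ?_⟩
  have hc : |B i i| ≤ ∑ k, |B k k| := single_le_sum (fun k _ => abs_nonneg (B k k)) (mem_univ i)
  rcases eq_or_ne i j with rfl | hij
  · simp only [add_apply, smul_apply, one_apply_eq, smul_eq_mul, mul_one]
    constructor <;> linarith [neg_abs_le (B i i), abs_nonneg (B i i)]
  · simp [one_apply_ne hij, hB i j hij]

lemma exp_apply_nonneg {B : Matrix ι ι ℝ} (hB : ∀ i j, i ≠ j → 0 ≤ B i j) (i j : ι) :
    0 ≤ exp B i j := by
  obtain ⟨c, hc⟩ := exists_nonneg_le_add_smul_one hB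
  rw [exp_eq_smul_exp_add_smul_one B c, smul_apply, smul_eq_mul]
  exact mul_nonneg (Real.exp_pos _).le (exp_apply_nonneg_of_nonneg (fun i j => (hc i j).1) i j)

lemma exp_apply_pos {B : Matrix ι ι ℝ} (hB : ∀ i j, i ≠ j → 0 ≤ B i j)
    (hconn : ∀ i j, i ≠ j → Relation.TransGen (fun u v => 0 < B u v) i j) (i j : ι) :
    0 < exp B i j := by
  obtain ⟨c, hc⟩ := exists_nonneg_le_add_smul_one hB
  have hN : ∀ i j, 0 ≤ (B + c • 1) i j := fun i j => (hc i j).1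
  rw [exp_eq_smul_exp_add_smul_one B c, smul_apply, smul_eq_mul]
  refine mul_pos (Real.exp_pos _) ?_
  rcases eq_or_ne i j with rfl | hij
  · exact exp_apply_pos_of_pow_apply_pos hN (k := 0) (by simp)
  · obtain ⟨k, hk⟩ := exists_pow_apply_pos_of_transGen hN <|
      Relation.TransGen.mono (fun u v huv => huv.trans_le (hc u v).2) _ _ (hconn i j hij)
    exact exp_apply_pos_of_pow_apply_pos hN hk

lemma exp_mulVec_of_mulVec_eq_zero {M : Matrix ι ι ℝ} {v : ι → ℝ} (hv : M *ᵥ v = 0) :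
    exp M *ᵥ v = v := by
  have hterm : ∀ k ≠ 0, ((k.factorial : ℝ)⁻¹ • M ^ k) *ᵥ v = 0 := fun k hk => by
    obtain ⟨k, rfl⟩ := Nat.exists_eq_succ_of_ne_zero hk
    rw [smul_mulVec, pow_succ, ← mulVec_mulVec, hv, mulVec_zero, smul_zero]
  have hsum := (exp_series_hasSum_exp' (𝕂 := ℝ) M).map (mulVec.addMonoidHomLeft v)
    (continuous_id.matrix_mulVec continuous_const)
  exact (hsum.unique (hasSum_single 0 hterm)).trans (by simp)

lemma vecMul_exp_of_vecMul_eq_zero {M : Matrix ι ι ℝ} {v : ι → ℝ} (hv : v ᵥ* M = 0) :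
    v ᵥ* exp M = v := by
  rw [← mulVec_transpose, ← exp_transpose]
  exact exp_mulVec_of_mulVec_eq_zero (by rwa [mulVec_transpose])

lemma exp_mem_rowStochastic {B : Matrix ι ι ℝ} (hB : ∀ i j, i ≠ j → 0 ≤ B i j)
    (hB₁ : B *ᵥ 1 = 0) : exp B ∈ rowStochastic ℝ ι :=
  ⟨exp_apply_nonneg hB, exp_mulVec_of_mulVec_eq_zero hB₁⟩

end Matrix

section Consensus

variable {ι : Type*} [Fintype ι]

lemma exists_pos_le_apply_of_pos [Nonempty ι] {P : Matrix ι ι ℝ} (hP : ∀ i j, 0 < P i j) :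
    ∃ δ, 0 < δ ∧ 2 * δ ≤ 1 ∧ ∀ i j, δ ≤ P i j := by
  obtain ⟨⟨i₀, j₀⟩, hmin⟩ := Finite.exists_min fun p : ι × ι => P p.1 p.2
  refine ⟨min (P i₀ j₀) (1 / 2), lt_min (hP i₀ j₀) one_half_pos, ?_,
    fun i j => (min_le_left _ _).trans (hmin (i, j))⟩
  linarith [min_le_right (P i₀ j₀) (1 / 2)]

variable [DecidableEq ι]

lemma spread_exp_smul_mulVec_le [Nonempty ι] {B : Matrix ι ι ℝ}
    (hB : ∀ i j, i ≠ j → 0 ≤ B i j) (hB₁ : B *ᵥ 1 = 0) {δ : ℝ} (hδ : ∀ i j, δ ≤ exp B i j)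
    (hδ₂ : 2 * δ ≤ 1) (v : ι → ℝ) {t : ℝ} (ht : 0 ≤ t) :
    spread (exp (t • B) *ᵥ v) ≤ (1 - 2 * δ) ^ ⌊t⌋₊ * spread v := by
  have hsplit : exp (t • B) = exp ((t - ⌊t⌋₊) • B) * exp B ^ ⌊t⌋₊ := by
    rw [← Matrix.exp_nsmul, ← Nat.cast_smul_eq_nsmul ℝ, ← exp_add_of_commute _ _
      (((Commute.refl B).smul_left _).smul_right _), ← add_smul, sub_add_cancel]
  have hfrac : exp ((t - ⌊t⌋₊) • B) ∈ rowStochastic ℝ ι :=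
    exp_mem_rowStochastic (fun i j hij => mul_nonneg (sub_nonneg.2 (Nat.floor_le ht)) (hB i j hij))
      (by rw [smul_mulVec, hB₁, smul_zero])
  rw [hsplit, ← mulVec_mulVec]
  exact (spread_mulVec_le_spread hfrac _).trans
    (spread_pow_mulVec_le (exp_mem_rowStochastic hB hB₁) hδ hδ₂ v _)

theorem tendsto_exp_smul_mulVec_apply {B : Matrix ι ι ℝ} (hB : ∀ i j, i ≠ j → 0 ≤ B i j)
    (hconn : ∀ i j, i ≠ j → Relation.TransGen (fun u v => 0 < B u v) i j) (hB₁ : B *ᵥ 1 = 0)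
    {ξ : ι → ℝ} (hξ₀ : ∀ i, 0 ≤ ξ i) (hξ₁ : ∑ i, ξ i = 1) (hξB : ξ ᵥ* B = 0) (v : ι → ℝ)
    (i : ι) : Tendsto (fun t : ℝ => (exp (t • B) *ᵥ v) i) atTop (𝓝 (ξ ⬝ᵥ v)) := by
  have : Nonempty ι := ⟨i⟩
  obtain ⟨δ, hδ₀, hδ₂, hδ⟩ := exists_pos_le_apply_of_pos (exp_apply_pos hB hconn)
  have hconserved : ∀ t : ℝ, ξ ⬝ᵥ (exp (t • B) *ᵥ v) = ξ ⬝ᵥ v := fun t => by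
    rw [dotProduct_mulVec, vecMul_exp_of_vecMul_eq_zero (by rw [vecMul_smul, hξB, smul_zero])]
  have hdecay : Tendsto (fun t : ℝ => (1 - 2 * δ) ^ ⌊t⌋₊ * spread v) atTop (𝓝 0) := by
    simpa using ((tendsto_pow_atTop_nhds_zero_of_lt_one (by linarith) (by linarith)).comp
      tendsto_nat_floor_atTop).mul_const (spread v)
  rw [← tendsto_sub_nhds_zero_iff]
  refine squeeze_zero_norm' ?_ hdecay
  filter_upwards [eventually_ge_atTop 0] with t ht
  rw [Real.norm_eq_abs, ← hconserved t]
  exact (abs_sub_dotProduct_le_spread hξ₀ hξ₁ _ i).trans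
    (spread_exp_smul_mulVec_le hB hB₁ hδ hδ₂ v ht)

lemma eq_exp_smul_mulVec_of_hasDerivWithinAt (B : Matrix ι ι ℝ) {x : ℝ → ι → ℝ}
    (hx : ∀ t ∈ Set.Ici (0 : ℝ), HasDerivWithinAt x (B *ᵥ x t) (Set.Ici 0) t) {t : ℝ}
    (ht : 0 ≤ t) : x t = exp (t • B) *ᵥ x 0 := by
  have hexp (s : ℝ) :
      HasDerivAt (fun u : ℝ => exp (u • B) *ᵥ x 0) (B *ᵥ (exp (s • B) *ᵥ x 0)) s := by
    rw [mulVec_mulVec]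
    exact (((mulVecBilin ℝ ℝ).flip (x 0)).toContinuousLinearMap.hasFDerivAt).comp_hasDerivAt s
      (hasDerivAt_exp_smul_const' B s)
  refine ODE_solution_unique (v := fun _ z => B *ᵥ z)
    (fun _ => (mulVecLin B).toContinuousLinearMap.lipschitz)
    (fun s hs => ((hx s hs.1).continuousWithinAt).mono fun u hu => hu.1)
    (fun s hs => (hx s hs.1).mono (Set.Ici_subset_Ici.mpr hs.1))
    (fun s _ => (hexp s).continuousAt.continuousWithinAt)
    (fun s _ => (hexp s).hasDerivWithinAt) (by simp) ⟨ht, le_rfl⟩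

end Consensus

/-- Linear protocol special case: On a strongly connected
weighted digraph with Laplacian `L` and `α > 0`, every solution of the linear
protocol `ẋ = -αLx` reaches consensus: `x_i(t) → ∑ j, ξ_j x_j(0)` for every
`i`, where `ξ` is the normalized positive left eigenvector of `L` for
eigenvalue `0`. -/
theorem linear_consensus
    (n : ℕ) (A : Matrix (Fin n) (Fin n) ℝ)
    (hA : ∀ i j, 0 ≤ A i j) (hdiag : ∀ i, A i i = 0)
    (hSC : ∀ i j : Fin n, i ≠ j → Relation.TransGen (fun u v => 0 < A u v) i j)
    (L : Matrix (Fin n) (Fin n) ℝ)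
    (hL : ∀ i j, L i j = if i = j then ∑ k ∈ Finset.univ.erase i, A i k else -A i j)
    (ξ : Fin n → ℝ) (hξpos : ∀ i, 0 < ξ i) (hξsum : ∑ i, ξ i = 1)
    (hξ : ξ ᵥ* L = 0)
    (α : ℝ) (hα : 0 < α)
    (x : ℝ → Fin n → ℝ)
    (hode : ∀ i, ∀ t ∈ Set.Ici (0 : ℝ),
      HasDerivWithinAt (fun s => x s i) (-α * ∑ j, L i j * x t j) (Set.Ici (0 : ℝ)) t) :
    ∀ i, Filter.Tendsto (fun t => x t i) Filter.atTop
      (nhds (∑ j, ξ j * x 0 j)) := by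
  intro i
  have hLA : L = laplacian A := ext fun i j => hL i j
  set B := -α • L with hBdef
  have hBoff : ∀ u v, u ≠ v → B u v = α * A u v := fun u v huv => by simp [hBdef, hL, huv]
  have hB : ∀ u v, u ≠ v → 0 ≤ B u v := fun u v huv =>
    (hBoff u v huv).symm ▸ mul_nonneg hα.le (hA u v)
  have hconn : ∀ u v, u ≠ v → Relation.TransGen (fun a b => 0 < B a b) u v := fun u v huv =>
    Relation.TransGen.mono (fun a b hab => by
      have hne : a ≠ b := by rintro rfl; exact hab.ne' (hdiag a)
      exact (hBoff a b hne).symm ▸ mul_pos hα hab) _ _ (hSC u v huv)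
  have hB₁ : B *ᵥ 1 = 0 := by rw [hBdef, smul_mulVec, hLA, laplacian_mulVec_one, smul_zero]
  have hξB : ξ ᵥ* B = 0 := by rw [hBdef, vecMul_smul, hξ, smul_zero]
  have hx : ∀ t ∈ Set.Ici (0 : ℝ), HasDerivWithinAt x (B *ᵥ x t) (Set.Ici 0) t := fun t ht =>
    hasDerivWithinAt_pi.2 fun j => by
      simpa [hBdef, mulVec, dotProduct, mul_sum, mul_assoc] using hode j t ht
  refine (tendsto_exp_smul_mulVec_apply hB hconn hB₁ (fun j => (hξpos j).le) hξsum hξB (x 0)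
    i).congr' ?_
  filter_upwards [eventually_ge_atTop 0] with t ht
  rw [← eq_exp_smul_mulVec_of_hasDerivWithinAt B hx ht]
end

section
/- (Exponential consensus under a sector-bounded nonlinearity) Suppose the weighted digraph G on n nodes is strongly connected with Laplacian L, and let h : ℝ → ℝ be continuous with h(0) = 0 and satisfy (h(w_1) − h(w_2))/(w_1 − w_2) ≥ α for some α > 0 and all w_1 ≠ w_2. Then every solution of ẋ_i(t) = −∑_{j=1}^n l_ij h(x_j(t)) converges to consensus exponentially: there exist constants C ≥ 0 and λ > 0 (depending on L, α, and x(0)) such that |x_i(t) − x_ξ| ≤ C e^{−λ t} for all i and all t ≥ 0, where x_ξ = ∑_{j=1}^n ξ_j x_j(0) and ξ is the normalized positive left eigenvector of L for the eigenvalue 0. -/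
/-!
Since `ξ` is a left null vector of `L`, the `ξ`-weighted mean `c` of `x(t)` is conserved. The
Lyapunov function `V = ∑ ξᵢ ∫_c^{xᵢ} (h - h c)` dominates `(α/2) ∑ ξᵢ (xᵢ - c)²` and decreases at
the rate `½ ∑ ξᵢ aᵢⱼ (h xᵢ - h xⱼ)²`. As `c` is a weighted mean of the `xᵢ`, `h c` lies between
two of the values `h xᵢ`; chaining edge differences along paths of the strongly connected graph
then bounds `V` by a multiple of that rate, so `V` decays exponentially by Grönwall.
-/

open Matrix BigOperators Real Set

theorem monotone_sub_mul_of_sector {h : ℝ → ℝ} {α : ℝ}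
    (hsector : ∀ w₁ w₂ : ℝ, w₁ ≠ w₂ → α ≤ (h w₁ - h w₂) / (w₁ - w₂)) :
    Monotone fun w => h w - α * w := by
  intro a b hab
  rcases hab.eq_or_lt with rfl | hlt
  · rfl
  · have := (le_div_iff₀ (sub_pos.2 hlt)).1 (hsector b a hlt.ne')
    dsimp only
    linarith

theorem Monotone.intervalIntegral_le_mul {φ : ℝ → ℝ} (hφ : Monotone φ) (a b : ℝ) :
    ∫ v in a..b, φ v ≤ (b - a) * φ b := by
  rcases le_total a b with hab | hba
  · calc ∫ v in a..b, φ v ≤ ∫ _ in a..b, φ b :=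
          intervalIntegral.integral_mono_on hab hφ.intervalIntegrable intervalIntegrable_const
            fun v hv => hφ hv.2
      _ = (b - a) * φ b := by simp
  · have : ∫ _ in b..a, φ b ≤ ∫ v in b..a, φ v :=
      intervalIntegral.integral_mono_on hba intervalIntegrable_const hφ.intervalIntegrable
        fun v hv => hφ hv.1
    rw [intervalIntegral.integral_symm]
    simp only [intervalIntegral.integral_const, smul_eq_mul] at this
    linarith

theorem Monotone.mul_le_intervalIntegral {φ : ℝ → ℝ} (hφ : Monotone φ) (a b : ℝ) :
    (b - a) * φ a ≤ ∫ v in a..b, φ v := by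
  rw [intervalIntegral.integral_symm]
  linarith [hφ.intervalIntegral_le_mul b a]

/-- The Bregman divergence of an antiderivative of `h`, taken at `u` relative to `c`. -/
noncomputable def bregman (h : ℝ → ℝ) (c u : ℝ) : ℝ :=
  ∫ v in c..u, (h v - h c)

section Sector

variable {h : ℝ → ℝ} {α : ℝ}

theorem Monotone.of_sub_mul (hα : 0 ≤ α) (hmono : Monotone fun w => h w - α * w) :
    Monotone h := by
  intro a b hab
  have := hmono hab
  dsimp only at this
  nlinarith

theorem mul_sq_le_bregman (hmono : Monotone fun w => h w - α * w) (c u : ℝ) :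
    α / 2 * (u - c) ^ 2 ≤ bregman h c u := by
  have hφ : Monotone fun v => (h v - α * v) - (h c - α * c) := hmono.add_const _
  have hsplit : bregman h c u
      = (∫ v in c..u, ((h v - α * v) - (h c - α * c))) + ∫ v in c..u, α * (v - c) := by
    rw [bregman, ← intervalIntegral.integral_add hφ.intervalIntegrable
      ((by fun_prop : Continuous fun v => α * (v - c)).intervalIntegrable _ _)]
    congr 1 with v
    ring
  have hquad : ∫ v in c..u, α * (v - c) = α / 2 * (u - c) ^ 2 := by
    simp only [intervalIntegral.integral_const_mul, intervalIntegral.intervalIntegrable_id,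
      intervalIntegrable_const, intervalIntegral.integral_sub, integral_id,
      intervalIntegral.integral_const, smul_eq_mul]
    ring
  have := hφ.mul_le_intervalIntegral c u
  simp only [sub_self, mul_zero] at this
  linarith

theorem bregman_le_sq_div (hα : 0 < α) (hmono : Monotone fun w => h w - α * w) (c u : ℝ) :
    bregman h c u ≤ (h u - h c) ^ 2 / α := by
  have hh : Monotone h := hmono.of_sub_mul hα.le
  have hint : bregman h c u ≤ (u - c) * (h u - h c) :=
    (hh.add_const (-h c)).intervalIntegral_le_mul c u
  have hsec : 0 ≤ (h u - h c) * ((h u - h c) - α * (u - c)) := by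
    rcases le_total c u with hcu | huc
    · have h1 := hmono hcu
      have h2 := hh hcu
      dsimp only at h1
      exact mul_nonneg (by linarith) (by linarith)
    · have h1 := hmono huc
      have h2 := hh huc
      dsimp only at h1
      exact mul_nonneg_of_nonpos_of_nonpos (by linarith) (by linarith)
  rw [le_div_iff₀ hα]
  nlinarith

theorem hasDerivAt_bregman (hcont : Continuous h) (c u : ℝ) :
    HasDerivAt (bregman h c) (h u - h c) u :=
  ((hcont.sub continuous_const).integral_hasStrictDerivAt c u).hasDerivAt

end Sector

def dirichletEnergy {ι : Type*} [Fintype ι] (A : Matrix ι ι ℝ) (ξ g : ι → ℝ) : ℝ :=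
  ∑ i, ∑ j, ξ i * A i j * (g i - g j) ^ 2

theorem dirichletEnergy_nonneg {ι : Type*} [Fintype ι] {A : Matrix ι ι ℝ} {ξ : ι → ℝ}
    (hA : ∀ i j, 0 ≤ A i j) (hξ : ∀ i, 0 ≤ ξ i) (g : ι → ℝ) : 0 ≤ dirichletEnergy A ξ g :=
  Finset.sum_nonneg fun i _ => Finset.sum_nonneg fun j _ =>
    mul_nonneg (mul_nonneg (hξ i) (hA i j)) (sq_nonneg _)

section Laplacian

variable {ι : Type*} [Fintype ι] [DecidableEq ι] {A L : Matrix ι ι ℝ}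

theorem laplacian_mulVec_apply (hdiag : ∀ i, A i i = 0)
    (hL : ∀ i j, L i j = if i = j then ∑ k ∈ Finset.univ.erase i, A i k else -A i j)
    (g : ι → ℝ) (i : ι) : (L *ᵥ g) i = ∑ j, A i j * (g i - g j) := by
  have hLij : ∀ j, L i j = (if i = j then ∑ k, A i k else 0) - A i j := by
    intro j
    rcases eq_or_ne i j with rfl | hij
    · rw [hL, if_pos rfl, if_pos rfl, ← Finset.add_sum_erase _ _ (Finset.mem_univ i), hdiag]
      ring
    · rw [hL, if_neg hij, if_neg hij, zero_sub]
  simp only [mulVec, dotProduct, hLij, sub_mul, ite_mul, zero_mul, Finset.sum_sub_distrib,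
    Finset.sum_ite_eq, Finset.mem_univ, if_true, mul_sub, Finset.sum_mul]

theorem sum_mul_sum_mul_sub_eq_zero {ξ : ι → ℝ} (hdiag : ∀ i, A i i = 0)
    (hL : ∀ i j, L i j = if i = j then ∑ k ∈ Finset.univ.erase i, A i k else -A i j)
    (hξ : ξ ᵥ* L = 0) (g : ι → ℝ) : ∑ i, ξ i * ∑ j, A i j * (g i - g j) = 0 := by
  have := dotProduct_mulVec ξ L g
  rw [hξ, zero_dotProduct] at this
  simpa only [dotProduct, laplacian_mulVec_apply hdiag hL] using this

theorem sum_mul_laplacian_mulVec_eq_dirichletEnergy {ξ : ι → ℝ} (hdiag : ∀ i, A i i = 0)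
    (hL : ∀ i j, L i j = if i = j then ∑ k ∈ Finset.univ.erase i, A i k else -A i j)
    (hξ : ξ ᵥ* L = 0) (g : ι → ℝ) (c : ℝ) :
    ∑ i, ξ i * ((g i - c) * (L *ᵥ g) i) = dirichletEnergy A ξ g / 2 := by
  have hbal := sum_mul_sum_mul_sub_eq_zero hdiag hL hξ
  have hsplit : ∀ i, ξ i * ((g i - c) * (L *ᵥ g) i)
      = (∑ j, ξ i * A i j * (g i - g j) ^ 2) / 2
        + (ξ i * ∑ j, A i j * (g i ^ 2 - g j ^ 2)) / 2 - c * (ξ i * ∑ j, A i j * (g i - g j)) := by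
    intro i
    simp only [laplacian_mulVec_apply hdiag hL, Finset.mul_sum, Finset.sum_div,
      ← Finset.sum_add_distrib, ← Finset.sum_sub_distrib]
    exact Finset.sum_congr rfl fun j _ => by ring
  rw [Finset.sum_congr rfl fun i _ => hsplit i, Finset.sum_sub_distrib, Finset.sum_add_distrib,
    ← Finset.sum_div, ← Finset.sum_div, ← Finset.mul_sum, hbal (fun i => g i ^ 2), hbal g,
    dirichletEnergy]
  ring

end Laplacian

theorem Relation.ReflTransGen.exists_dist_le {α β : Type*} [PseudoMetricSpace β]
    {r : α → α → Prop} {a b : α} (hab : Relation.ReflTransGen r a b) :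
    ∃ N : ℕ, ∀ (g : α → β) (B : ℝ),
      (∀ u v, r u v → dist (g u) (g v) ≤ B) → dist (g a) (g b) ≤ N * B := by
  induction hab with
  | refl => exact ⟨0, fun g B _ => by simp⟩
  | @tail b c _ hbc ih =>
    obtain ⟨N, hN⟩ := ih
    refine ⟨N + 1, fun g B hB => ?_⟩
    calc dist (g a) (g c) ≤ dist (g a) (g b) + dist (g b) (g c) := dist_triangle _ _ _
      _ ≤ N * B + B := add_le_add (hN g B hB) (hB _ _ hbc)
      _ = ((N + 1 : ℕ) : ℝ) * B := by push_cast; ring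

theorem exists_dist_le_of_forall_reflTransGen {α β : Type*} [Finite α] [PseudoMetricSpace β]
    {r : α → α → Prop} (hr : ∀ a b, Relation.ReflTransGen r a b) :
    ∃ N : ℕ, ∀ (g : α → β) (B : ℝ), 0 ≤ B →
      (∀ u v, r u v → dist (g u) (g v) ≤ B) → ∀ a b, dist (g a) (g b) ≤ N * B := by
  choose N hN using fun q : α × α => (hr q.1 q.2).exists_dist_le (β := β)
  obtain ⟨M, hM⟩ := Finite.exists_le N
  refine ⟨M, fun g B hB hedge a b => (hN (a, b) g B hedge).trans ?_⟩
  exact mul_le_mul_of_nonneg_right (by exact_mod_cast hM (a, b)) hB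

theorem single_le_sum_sum {ι κ M : Type*} [Fintype ι] [Fintype κ] [AddCommMonoid M]
    [PartialOrder M] [IsOrderedAddMonoid M] {f : ι → κ → M} (hf : ∀ i j, 0 ≤ f i j)
    (i : ι) (j : κ) : f i j ≤ ∑ i, ∑ j, f i j :=
  (Finset.single_le_sum (fun j _ => hf i j) (Finset.mem_univ j)).trans
    (Finset.single_le_sum (f := fun i => ∑ j, f i j)
      (fun i _ => Finset.sum_nonneg fun j _ => hf i j) (Finset.mem_univ i))

-- Non-edges contribute `0⁻¹ = 0` to the constant.
theorem sq_sub_le_sum_inv_mul_dirichletEnergy {ι : Type*} [Fintype ι] {A : Matrix ι ι ℝ}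
    {ξ : ι → ℝ} (hA : ∀ i j, 0 ≤ A i j) (hξ : ∀ i, 0 < ξ i) (g : ι → ℝ) {u v : ι}
    (huv : 0 < A u v) :
    (g u - g v) ^ 2 ≤ (∑ u, ∑ v, (ξ u * A u v)⁻¹) * dirichletEnergy A ξ g := by
  have hterm : ∀ u v, 0 ≤ ξ u * A u v := fun u v => mul_nonneg (hξ u).le (hA u v)
  have hle : ξ u * A u v * (g u - g v) ^ 2 ≤ dirichletEnergy A ξ g :=
    single_le_sum_sum (fun u v => mul_nonneg (hterm u v) (sq_nonneg (g u - g v))) u v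
  have hinv : (ξ u * A u v)⁻¹ ≤ ∑ u, ∑ v, (ξ u * A u v)⁻¹ :=
    single_le_sum_sum (fun u v => inv_nonneg.2 (hterm u v)) u v
  calc (g u - g v) ^ 2 = (ξ u * A u v)⁻¹ * (ξ u * A u v * (g u - g v) ^ 2) := by
        rw [← mul_assoc, inv_mul_cancel₀ (mul_pos (hξ u) huv).ne', one_mul]
    _ ≤ (∑ u, ∑ v, (ξ u * A u v)⁻¹) * dirichletEnergy A ξ g :=
        mul_le_mul hinv hle (mul_nonneg (hterm u v) (sq_nonneg _))
          ((inv_nonneg.2 (hterm u v)).trans hinv)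

theorem exists_sq_sub_le_dirichletEnergy {ι : Type*} [Fintype ι] {A : Matrix ι ι ℝ}
    {ξ : ι → ℝ} (hA : ∀ i j, 0 ≤ A i j)
    (hSC : ∀ i j : ι, i ≠ j → Relation.TransGen (fun u v => 0 < A u v) i j)
    (hξ : ∀ i, 0 < ξ i) :
    ∃ K, 0 < K ∧ ∀ g i j, (g i - g j) ^ 2 ≤ K * dirichletEnergy A ξ g := by
  obtain ⟨N, hN⟩ := exists_dist_le_of_forall_reflTransGen (β := ℝ) fun i j =>
    (eq_or_ne i j).elim (fun hij => hij ▸ .refl) fun hij => (hSC i j hij).to_reflTransGen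
  set M := ∑ u, ∑ v, (ξ u * A u v)⁻¹
  have hM : 0 ≤ M := Finset.sum_nonneg fun u _ => Finset.sum_nonneg fun v _ =>
    inv_nonneg.2 (mul_nonneg (hξ u).le (hA u v))
  refine ⟨N ^ 2 * M + 1, by positivity, fun g i j => ?_⟩
  have hE := dirichletEnergy_nonneg hA (fun i => (hξ i).le) g
  have hdist := hN g _ (sqrt_nonneg (M * dirichletEnergy A ξ g)) (fun u v huv => by
    rw [Real.dist_eq]
    exact Real.abs_le_sqrt (sq_sub_le_sum_inv_mul_dirichletEnergy hA hξ g huv)) i j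
  rw [Real.dist_eq] at hdist
  calc (g i - g j) ^ 2 = |g i - g j| ^ 2 := (sq_abs _).symm
    _ ≤ (N * √(M * dirichletEnergy A ξ g)) ^ 2 := pow_le_pow_left₀ (abs_nonneg _) hdist 2
    _ = N ^ 2 * M * dirichletEnergy A ξ g := by rw [mul_pow, sq_sqrt (mul_nonneg hM hE)]; ring
    _ ≤ (N ^ 2 * M + 1) * dirichletEnergy A ξ g := by nlinarith

theorem sq_sub_le_max_of_le_of_le {a b c : ℝ} (hac : a ≤ c) (hcb : c ≤ b) (z : ℝ) :
    (z - c) ^ 2 ≤ max ((z - a) ^ 2) ((z - b) ^ 2) := by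
  rcases le_total z c with hzc | hcz
  · exact le_max_of_le_right (by nlinarith)
  · exact le_max_of_le_left (by nlinarith)

section WeightedMean

variable {ι : Type*} [Fintype ι] {ξ : ι → ℝ}

theorem exists_le_weightedMean_le (hξ : ∀ i, 0 < ξ i) (hsum : ∑ i, ξ i = 1) (y : ι → ℝ) :
    (∃ p, y p ≤ ∑ i, ξ i * y i) ∧ ∃ q, ∑ i, ξ i * y i ≤ y q := by
  set m := ∑ i, ξ i * y i
  have hne : (Finset.univ : Finset ι).Nonempty :=
    Finset.nonempty_of_sum_ne_zero (hsum ▸ one_ne_zero)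
  have hm : ∑ i, ξ i * m = m := by rw [← Finset.sum_mul, hsum, one_mul]
  obtain ⟨p, -, hp⟩ := Finset.exists_le_of_sum_le hne (f := fun i => ξ i * y i)
    (g := fun i => ξ i * m) hm.ge
  obtain ⟨q, -, hq⟩ := Finset.exists_le_of_sum_le hne (f := fun i => ξ i * m)
    (g := fun i => ξ i * y i) hm.le
  exact ⟨⟨p, le_of_mul_le_mul_left hp (hξ p)⟩, ⟨q, le_of_mul_le_mul_left hq (hξ q)⟩⟩

variable {h : ℝ → ℝ} {α : ℝ}

theorem mul_sq_le_sum_bregman (hα : 0 ≤ α) (hmono : Monotone fun w => h w - α * w)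
    (hξ : ∀ i, 0 ≤ ξ i) (c : ℝ) (y : ι → ℝ) (i : ι) :
    ξ i * (α / 2 * (y i - c) ^ 2) ≤ ∑ j, ξ j * bregman h c (y j) :=
  (mul_le_mul_of_nonneg_left (mul_sq_le_bregman hmono c (y i)) (hξ i)).trans <|
    Finset.single_le_sum (f := fun j => ξ j * bregman h c (y j))
      (fun j _ => mul_nonneg (hξ j) ((by positivity : 0 ≤ α / 2 * (y j - c) ^ 2).trans
        (mul_sq_le_bregman hmono c (y j)))) (Finset.mem_univ i)

theorem sum_bregman_weightedMean_le {A : Matrix ι ι ℝ} {K : ℝ} (hα : 0 < α)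
    (hmono : Monotone fun w => h w - α * w) (hξ : ∀ i, 0 < ξ i) (hsum : ∑ i, ξ i = 1)
    (y : ι → ℝ)
    (hK : ∀ i j, (h (y i) - h (y j)) ^ 2 ≤ K * dirichletEnergy A ξ fun i => h (y i)) :
    ∑ i, ξ i * bregman h (∑ j, ξ j * y j) (y i)
      ≤ K / α * dirichletEnergy A ξ fun i => h (y i) := by
  set c := ∑ j, ξ j * y j
  obtain ⟨⟨p, hp⟩, ⟨q, hq⟩⟩ := exists_le_weightedMean_le hξ hsum y
  have hh : Monotone h := hmono.of_sub_mul hα.le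
  have hterm : ∀ i, bregman h c (y i) ≤ K / α * dirichletEnergy A ξ fun i => h (y i) := by
    intro i
    calc bregman h c (y i) ≤ (h (y i) - h c) ^ 2 / α := bregman_le_sq_div hα hmono c (y i)
      _ ≤ (K * dirichletEnergy A ξ fun i => h (y i)) / α := by
          gcongr
          exact (sq_sub_le_max_of_le_of_le (hh hp) (hh hq) _).trans (max_le (hK i p) (hK i q))
      _ = K / α * dirichletEnergy A ξ fun i => h (y i) := by ring
  calc ∑ i, ξ i * bregman h c (y i)
      ≤ ∑ i, ξ i * (K / α * dirichletEnergy A ξ fun i => h (y i)) :=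
        Finset.sum_le_sum fun i _ => mul_le_mul_of_nonneg_left (hterm i) (hξ i).le
    _ = K / α * dirichletEnergy A ξ fun i => h (y i) := by rw [← Finset.sum_mul, hsum, one_mul]

end WeightedMean

theorem le_mul_exp_of_hasDerivWithinAt_le {f f' : ℝ → ℝ} {K a : ℝ}
    (hf : ∀ t ∈ Ici a, HasDerivWithinAt f (f' t) (Ici a) t)
    (hbound : ∀ t ∈ Ici a, f' t ≤ K * f t) :
    ∀ t ∈ Ici a, f t ≤ f a * exp (K * (t - a)) := by
  intro t ht
  have := le_gronwallBound_of_liminf_deriv_right_le (f' := f') (ε := 0) (b := t)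
    (fun s hs => (hf s hs.1).continuousWithinAt.mono Icc_subset_Ici_self)
    (fun s hs r hr => ((hf s hs.1).mono (Ici_subset_Ici.2 hs.1)).liminf_right_slope_le hr)
    le_rfl (fun s hs => by simpa using hbound s hs.1) t ⟨ht, le_rfl⟩
  rwa [gronwallBound_ε0] at this

theorem abs_le_sqrt_mul_exp_of_sq_le {y a κ t : ℝ} (ha : 0 ≤ a)
    (hy : y ^ 2 ≤ a * exp (-κ * t)) : |y| ≤ √a * exp (-(κ / 2) * t) :=
  calc |y| ≤ √(a * exp (-κ * t)) := Real.abs_le_sqrt hy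
    _ = √a * exp (-(κ / 2) * t) := by
        rw [sqrt_mul ha, ← exp_half]
        ring_nf

section ConsensusDynamics

variable {ι : Type*} [Fintype ι] {L : Matrix ι ι ℝ} {ξ : ι → ℝ} {x : ℝ → ι → ℝ}

theorem weightedMean_eq_of_hasDerivWithinAt (hξ : ξ ᵥ* L = 0) {u : ℝ → ι → ℝ}
    (hode : ∀ i, ∀ t ∈ Ici (0 : ℝ),
      HasDerivWithinAt (fun s => x s i) (-(L *ᵥ u t) i) (Ici 0) t) :
    ∀ t ∈ Ici (0 : ℝ), ∑ i, ξ i * x t i = ∑ i, ξ i * x 0 i := by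
  have hderiv : ∀ t ∈ Ici (0 : ℝ),
      HasDerivWithinAt (fun s => ∑ i, ξ i * x s i) 0 (Ici 0) t := by
    intro t ht
    have hzero : ∑ i, ξ i * -(L *ᵥ u t) i = 0 := by
      simp only [mul_neg, Finset.sum_neg_distrib, neg_eq_zero]
      rw [← dotProduct, dotProduct_mulVec, hξ, zero_dotProduct]
    exact (HasDerivWithinAt.fun_sum fun i _ => (hode i t ht).const_mul (ξ i)).congr_deriv hzero
  intro t ht
  exact constant_of_has_deriv_right_zero
    (fun s hs => (hderiv s hs.1).continuousWithinAt.mono Icc_subset_Ici_self)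
    (fun s hs => (hderiv s hs.1).mono (Ici_subset_Ici.2 hs.1)) t ⟨ht, le_rfl⟩

theorem hasDerivWithinAt_sum_bregman [DecidableEq ι] {A : Matrix ι ι ℝ} {h : ℝ → ℝ}
    (hdiag : ∀ i, A i i = 0)
    (hL : ∀ i j, L i j = if i = j then ∑ k ∈ Finset.univ.erase i, A i k else -A i j)
    (hξ : ξ ᵥ* L = 0) (hcont : Continuous h) (c : ℝ)
    (hode : ∀ i, ∀ t ∈ Ici (0 : ℝ),
      HasDerivWithinAt (fun s => x s i) (-(L *ᵥ fun j => h (x t j)) i) (Ici 0) t) :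
    ∀ t ∈ Ici (0 : ℝ), HasDerivWithinAt (fun s => ∑ i, ξ i * bregman h c (x s i))
      (-(dirichletEnergy A ξ (fun i => h (x t i)) / 2)) (Ici 0) t := by
  intro t ht
  have hderiv := HasDerivWithinAt.fun_sum (u := Finset.univ) fun i _ =>
    ((hasDerivAt_bregman hcont c (x t i)).comp_hasDerivWithinAt t (hode i t ht)).const_mul (ξ i)
  refine hderiv.congr_deriv ?_
  rw [← sum_mul_laplacian_mulVec_eq_dirichletEnergy hdiag hL hξ _ (h c),
    ← Finset.sum_neg_distrib]
  exact Finset.sum_congr rfl fun i _ => by ring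

theorem sum_bregman_le_mul_exp [DecidableEq ι] {A : Matrix ι ι ℝ} {h : ℝ → ℝ} {α K : ℝ}
    (hdiag : ∀ i, A i i = 0)
    (hL : ∀ i j, L i j = if i = j then ∑ k ∈ Finset.univ.erase i, A i k else -A i j)
    (hξ : ξ ᵥ* L = 0) (hξpos : ∀ i, 0 < ξ i) (hξsum : ∑ i, ξ i = 1) (hcont : Continuous h)
    (hα : 0 < α) (hmono : Monotone fun w => h w - α * w) (hK : 0 < K)
    (hpoincare : ∀ g i j, (g i - g j) ^ 2 ≤ K * dirichletEnergy A ξ g)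
    (hode : ∀ i, ∀ t ∈ Ici (0 : ℝ),
      HasDerivWithinAt (fun s => x s i) (-(L *ᵥ fun j => h (x t j)) i) (Ici 0) t) :
    ∀ t ∈ Ici (0 : ℝ), ∑ i, ξ i * bregman h (∑ j, ξ j * x 0 j) (x t i)
      ≤ (∑ i, ξ i * bregman h (∑ j, ξ j * x 0 j) (x 0 i)) * exp (-(α / (2 * K)) * t) := by
  set c := ∑ j, ξ j * x 0 j
  intro t ht
  have := le_mul_exp_of_hasDerivWithinAt_le (K := -(α / (2 * K)))
    (hasDerivWithinAt_sum_bregman hdiag hL hξ hcont c hode) (fun s hs => ?_) t ht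
  · rwa [sub_zero] at this
  have hV := sum_bregman_weightedMean_le hα hmono hξpos hξsum (x s) (hpoincare _)
  rw [weightedMean_eq_of_hasDerivWithinAt hξ hode s hs] at hV
  have : α / (2 * K) * ∑ i, ξ i * bregman h c (x s i)
      ≤ dirichletEnergy A ξ (fun i => h (x s i)) / 2 :=
    calc _ ≤ α / (2 * K) * (K / α * dirichletEnergy A ξ fun i => h (x s i)) :=
          mul_le_mul_of_nonneg_left hV (by positivity)
      _ = _ := by field_simp
  linarith

end ConsensusDynamics

theorem exponential_consensus_sector_general
    (n : ℕ) (A : Matrix (Fin n) (Fin n) ℝ)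
    (hA : ∀ i j, 0 ≤ A i j) (hdiag : ∀ i, A i i = 0)
    (hSC : ∀ i j : Fin n, i ≠ j → Relation.TransGen (fun u v => 0 < A u v) i j)
    (L : Matrix (Fin n) (Fin n) ℝ)
    (hL : ∀ i j, L i j = if i = j then ∑ k ∈ Finset.univ.erase i, A i k else -A i j)
    (ξ : Fin n → ℝ) (hξpos : ∀ i, 0 < ξ i) (hξsum : ∑ i, ξ i = 1)
    (hξ : ξ ᵥ* L = 0)
    (h : ℝ → ℝ) (hcont : Continuous h)
    (α : ℝ) (hα : 0 < α)
    (hsector : ∀ w₁ w₂ : ℝ, w₁ ≠ w₂ → α ≤ (h w₁ - h w₂) / (w₁ - w₂))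
    (x : ℝ → Fin n → ℝ)
    (hode : ∀ i, ∀ t ∈ Set.Ici (0 : ℝ),
      HasDerivWithinAt (fun s => x s i) (-∑ j, L i j * h (x t j)) (Set.Ici (0 : ℝ)) t) :
    ∃ C : ℝ, 0 ≤ C ∧ ∃ lam : ℝ, 0 < lam ∧
      ∀ i, ∀ t ∈ Set.Ici (0 : ℝ),
        |x t i - ∑ j, ξ j * x 0 j| ≤ C * Real.exp (-lam * t) := by
  have hmono := monotone_sub_mul_of_sector hsector
  obtain ⟨K, hK, hpoincare⟩ := exists_sq_sub_le_dirichletEnergy hA hSC hξpos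
  set c := ∑ j, ξ j * x 0 j
  set V := fun t => ∑ i, ξ i * bregman h c (x t i)
  have hdecay := sum_bregman_le_mul_exp hdiag hL hξ hξpos hξsum hcont hα hmono hK hpoincare hode
  have hlower := mul_sq_le_sum_bregman hα.le hmono (fun i => (hξpos i).le) c
  obtain ⟨i₀, -, hmin⟩ := Finset.univ.exists_min_image ξ
    (Finset.nonempty_of_sum_ne_zero (hξsum ▸ one_ne_zero))
  have hαξ : 0 < α * ξ i₀ := mul_pos hα (hξpos i₀)
  have hV0 : 0 ≤ V 0 := (mul_nonneg (hξpos i₀).le (by positivity)).trans (hlower (x 0) i₀)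
  refine ⟨√(2 * V 0 / (α * ξ i₀)), sqrt_nonneg _, α / (2 * K) / 2, by positivity,
    fun i t ht => abs_le_sqrt_mul_exp_of_sq_le (div_nonneg (by linarith) hαξ.le) ?_⟩
  rw [div_mul_eq_mul_div, le_div_iff₀ hαξ]
  calc (x t i - c) ^ 2 * (α * ξ i₀) = 2 * (ξ i₀ * (α / 2 * (x t i - c) ^ 2)) := by ring
    _ ≤ 2 * (ξ i * (α / 2 * (x t i - c) ^ 2)) := by gcongr; exact hmin i (Finset.mem_univ i)
    _ ≤ 2 * V t := by gcongr; exact hlower (x t) i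
    _ ≤ 2 * V 0 * exp (-(α / (2 * K)) * t) := by rw [mul_assoc]; gcongr; exact hdecay t ht

/-- Exponential consensus under a sector-bounded nonlinearity:
On a strongly connected weighted digraph with Laplacian `L`, if `h` is
continuous with `h(0) = 0` and satisfies the sector condition
`(h(w₁) - h(w₂))/(w₁ - w₂) ≥ α > 0`, then every solution of
`ẋ_i = -∑_j l_ij h(x_j)` converges to the consensus value
`x_ξ = ∑ j, ξ_j x_j(0)` exponentially fast. -/
theorem exponential_consensus_sector
    (n : ℕ) (A : Matrix (Fin n) (Fin n) ℝ)
    (hA : ∀ i j, 0 ≤ A i j) (hdiag : ∀ i, A i i = 0)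
    (hSC : ∀ i j : Fin n, i ≠ j → Relation.TransGen (fun u v => 0 < A u v) i j)
    (L : Matrix (Fin n) (Fin n) ℝ)
    (hL : ∀ i j, L i j = if i = j then ∑ k ∈ Finset.univ.erase i, A i k else -A i j)
    (ξ : Fin n → ℝ) (hξpos : ∀ i, 0 < ξ i) (hξsum : ∑ i, ξ i = 1)
    (hξ : ξ ᵥ* L = 0)
    (h : ℝ → ℝ) (hcont : Continuous h) (h0 : h 0 = 0)
    (α : ℝ) (hα : 0 < α)
    (hsector : ∀ w₁ w₂ : ℝ, w₁ ≠ w₂ → α ≤ (h w₁ - h w₂) / (w₁ - w₂))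
    (x : ℝ → Fin n → ℝ)
    (hode : ∀ i, ∀ t ∈ Set.Ici (0 : ℝ),
      HasDerivWithinAt (fun s => x s i) (-∑ j, L i j * h (x t j)) (Set.Ici (0 : ℝ)) t) :
    ∃ C : ℝ, 0 ≤ C ∧ ∃ lam : ℝ, 0 < lam ∧
      ∀ i, ∀ t ∈ Set.Ici (0 : ℝ),
        |x t i - ∑ j, ξ j * x 0 j| ≤ C * Real.exp (-lam * t) :=
  exponential_consensus_sector_general n A hA hdiag hSC L hL ξ hξpos hξsum hξ h hcont α hα hsector x
    hode
end
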